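/- arXiv:1310.4563 — 3 statements merged into one kernel-verified Lean document; each statement's English description precedes it below -/
import Mathlib

section
/- For every integer n ≥ 1, defining Ψ_n(x) = Σ_{j=1}^{n} C(n,j) · ((2j-2)!/(j-1)!) · ((1/2 + 2j)_{n-j} / (1/2)_n) · x^j, one has Ψ_n(-1) = -2n. -/
/-!
Using `(a)_{m+k} = (a)_m (a+m)_k`, the duplication `(a)_{2k} = 4^k (a/2)_k ((a+1)/2)_k` and
`(2m)!/m! = 4^m (1/2)_m`, the `j`-th summand of `Ψ_n(-1)` is `-1/2` times the `j`-th term of the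
balanced series `₃F₂(-n, n + 1/2, -1/2; 1/4, 3/4; 1)`, whose `j = 0` term is `1`. By
Pfaff–Saalschütz this series equals `(5/4)_n / (1/4)_n = 4n + 1`, so `Ψ_n(-1) = -(4n + 1 - 1)/2 = -2n`.
The Saalschütz evaluation follows from a Wilf–Zeilberger pair: `F(n, j) = t(n, j)/(4n + 1)`
satisfies `F(n+1, j) - F(n, j) = G(n, j+1) - G(n, j)` with `G(n, j+1)` a rational multiple of
`t(n, j)`, so `∑_j F(n, j)` does not depend on `n`.
-/

/-- Rising factorial (Pochhammer symbol) over ℚ. -/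
noncomputable def rf (a : ℚ) (k : ℕ) : ℚ := (ascPochhammer ℚ k).eval a

open Finset Nat

lemma rf_zero (a : ℚ) : rf a 0 = 1 := by simp [rf]

lemma rf_succ_right (a : ℚ) (k : ℕ) : rf a (k + 1) = rf a k * (a + k) :=
  ascPochhammer_succ_eval k a

lemma rf_succ_left (a : ℚ) (k : ℕ) : rf a (k + 1) = a * rf (a + 1) k := by
  simp [rf, ascPochhammer_succ_left, add_comm]

lemma rf_pos {a : ℚ} (ha : 0 < a) (k : ℕ) : 0 < rf a k :=
  ascPochhammer_pos k a ha

lemma rf_add (a : ℚ) (m k : ℕ) : rf a (m + k) = rf a m * rf (a + m) k := by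
  induction k with
  | zero => simp [rf_zero]
  | succ k ih =>
    rw [← add_assoc, rf_succ_right, rf_succ_right, ih]
    push_cast
    ring

lemma rf_two_mul (a : ℚ) (k : ℕ) :
    rf a (2 * k) = 4 ^ k * rf (a / 2) k * rf ((a + 1) / 2) k := by
  induction k with
  | zero => simp [rf_zero]
  | succ k ih =>
    rw [show 2 * (k + 1) = 2 * k + 1 + 1 by ring, rf_succ_right, rf_succ_right, ih,
      rf_succ_right, rf_succ_right]
    push_cast
    ring

lemma four_pow_mul_factorial_mul_rf_half (m : ℕ) :
    4 ^ m * (m ! : ℚ) * rf (1/2) m = (2 * m)! := by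
  induction m with
  | zero => simp [rf_zero]
  | succ m ih =>
    rw [show 2 * (m + 1) = 2 * m + 1 + 1 by ring, rf_succ_right]
    push_cast [factorial_succ]
    rw [← ih]
    ring

noncomputable def saalschutzTerm (n j : ℕ) : ℚ :=
  (-1) ^ j * n.choose j * rf (n + 1/2) j * rf (-1/2) j / (rf (1/4) j * rf (3/4) j)

lemma saalschutzTerm_zero_right (n : ℕ) : saalschutzTerm n 0 = 1 := by
  simp [saalschutzTerm, rf_zero]

lemma saalschutzTerm_succ_right (n j : ℕ) :
    saalschutzTerm n (j + 1) = -4 * (n - j) * (2 * n + 2 * j + 1) * (2 * j - 1) /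
      ((j + 1) * (4 * j + 1) * (4 * j + 3)) * saalschutzTerm n j := by
  have hchoose : (n.choose (j + 1) : ℚ) = n.choose j * (n - j) / (j + 1) := by
    rw [eq_div_iff (by positivity)]
    rcases le_or_gt j n with hjn | hnj
    · rw [← Nat.cast_sub hjn]
      exact_mod_cast Nat.choose_succ_right_eq n j
    · simp [Nat.choose_eq_zero_of_lt hnj, Nat.choose_eq_zero_of_lt (hnj.trans (lt_add_one j))]
  have h14 := (rf_pos (a := 1/4) (by norm_num) j).ne'
  have h34 := (rf_pos (a := 3/4) (by norm_num) j).ne'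
  simp only [saalschutzTerm, rf_succ_right, hchoose]
  field_simp
  ring

lemma saalschutzTerm_succ_succ (n j : ℕ) :
    saalschutzTerm (n + 1) (j + 1) = -4 * (n + 1) * (2 * n + 2 * j + 1) * (2 * n + 2 * j + 3) *
      (2 * j - 1) / ((j + 1) * (2 * n + 1) * (4 * j + 1) * (4 * j + 3)) * saalschutzTerm n j := by
  have hchoose : ((n + 1).choose (j + 1) : ℚ) = (n + 1) * n.choose j / (j + 1) := by
    rw [eq_div_iff (by positivity)]
    exact_mod_cast (Nat.add_one_mul_choose_eq n j).symm
  have hrf : rf ((n + 1 : ℕ) + 1/2) (j + 1) =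
      rf (n + 1/2) j * (n + 1/2 + j) * (n + 1/2 + (j + 1)) / (n + 1/2) := by
    have h := rf_succ_left (n + 1/2) (j + 1)
    rw [rf_succ_right, rf_succ_right, show (n : ℚ) + 1/2 + 1 = n + 1 + 1/2 by ring] at h
    rw [eq_div_iff (by positivity)]
    push_cast at h ⊢
    linear_combination (-1 : ℚ) * h
  have h14 := (rf_pos (a := 1/4) (by norm_num) j).ne'
  have h34 := (rf_pos (a := 3/4) (by norm_num) j).ne'
  simp only [saalschutzTerm, hchoose, hrf, rf_succ_right (-1/2), rf_succ_right (1/4),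
    rf_succ_right (3/4)]
  field_simp
  ring

theorem sum_range_eq_of_wz {M : Type*} [AddCommGroup M] {f f' g : ℕ → M} {n : ℕ}
    (hf : f (n + 1) = 0) (hg₀ : g 0 = 0) (hg : g (n + 2) = 0)
    (h : ∀ j, f' j - f j = g (j + 1) - g j) :
    ∑ j ∈ range (n + 2), f' j = ∑ j ∈ range (n + 1), f j := by
  have htel : ∑ j ∈ range (n + 2), (f' j - f j) = 0 := by
    simp only [h, sum_range_sub, hg, hg₀, sub_zero]
  rw [sum_sub_distrib, sub_eq_zero, sum_range_succ f, hf, add_zero] at htel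
  exact htel

noncomputable def saalschutzCert (n : ℕ) : ℕ → ℚ
  | 0 => 0
  | j + 1 => 4 * (2 * j - 1) * (2 * n + 2 * j + 1) /
      ((2 * n + 1) * (4 * n + 1) * (4 * n + 5)) * saalschutzTerm n j

lemma saalschutzTerm_wz (n j : ℕ) :
    saalschutzTerm (n + 1) j / (4 * (n + 1 : ℕ) + 1) - saalschutzTerm n j / (4 * n + 1) =
      saalschutzCert n (j + 1) - saalschutzCert n j := by
  cases j with
  | zero =>
    simp only [saalschutzCert, saalschutzTerm_zero_right]
    push_cast
    field_simp
    ring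
  | succ j =>
    simp only [saalschutzCert, saalschutzTerm_succ_succ, saalschutzTerm_succ_right]
    push_cast
    field_simp
    ring

theorem sum_saalschutzTerm (n : ℕ) :
    ∑ j ∈ range (n + 1), saalschutzTerm n j = 4 * n + 1 := by
  suffices h : ∑ j ∈ range (n + 1), saalschutzTerm n j / (4 * n + 1) = 1 by
    rwa [← sum_div, div_eq_one_iff_eq (by positivity)] at h
  induction n with
  | zero => simp [saalschutzTerm_zero_right]
  | succ n ih =>
    refine (sum_range_eq_of_wz ?_ rfl ?_ (saalschutzTerm_wz n)).trans ih
    · simp [saalschutzTerm]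
    · simp [saalschutzCert, saalschutzTerm]

lemma summand_eq_neg_half_mul_saalschutzTerm {n j : ℕ} (hj : 1 ≤ j) (hjn : j ≤ n) :
    (n.choose j : ℚ) * (((2 * j - 2).factorial : ℚ) / ((j - 1).factorial : ℚ)) *
        (rf (1/2 + 2 * j) (n - j) / rf (1/2) n) * (-1 : ℚ) ^ j
      = -(1/2) * saalschutzTerm n j := by
  obtain ⟨m, rfl⟩ : ∃ m, j = m + 1 := ⟨j - 1, by omega⟩
  rw [show 2 * (m + 1) - 2 = 2 * m by omega, add_tsub_cancel_right,
    ← four_pow_mul_factorial_mul_rf_half]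
  have hsplit : rf (1/2) (2 * (m + 1)) * rf (1/2 + 2 * (m + 1 : ℕ)) (n - (m + 1)) =
      rf (1/2) n * rf (n + 1/2) (m + 1) := by
    have h := rf_add (1/2) (2 * (m + 1)) (n - (m + 1))
    rw [show 2 * (m + 1) + (n - (m + 1)) = n + (m + 1) by omega, rf_add, add_comm (1/2 : ℚ)] at h
    exact_mod_cast h.symm
  have hdouble : rf (1/2) (2 * (m + 1)) = 4 ^ (m + 1) * rf (1/4) (m + 1) * rf (3/4) (m + 1) := by
    rw [rf_two_mul]
    norm_num
  have hneg : rf (-1/2) (m + 1) = -(1/2) * rf (1/2) m := by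
    rw [rf_succ_left]
    norm_num
  have h14 := (rf_pos (a := 1/4) (by norm_num) (m + 1)).ne'
  have h34 := (rf_pos (a := 3/4) (by norm_num) (m + 1)).ne'
  have hhalf := (rf_pos (a := 1/2) (by norm_num) n).ne'
  have hshift : rf (1/2 + 2 * (m + 1 : ℕ)) (n - (m + 1)) =
      rf (1/2) n * rf (n + 1/2) (m + 1) / (4 ^ (m + 1) * rf (1/4) (m + 1) * rf (3/4) (m + 1)) := by
    rw [← hdouble, ← hsplit, mul_div_cancel_left₀ _ (rf_pos (by norm_num) _).ne']
  rw [hshift, saalschutzTerm, hneg]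
  field_simp
  ring

theorem stmt_4_general (n : ℕ) :
    ∑ j ∈ Finset.Icc 1 n,
        (n.choose j : ℚ) * (((2 * j - 2).factorial : ℚ) / ((j - 1).factorial : ℚ)) *
          (rf (1/2 + 2 * j) (n - j) / rf (1/2) n) * (-1 : ℚ) ^ j
      = -2 * n := by
  have hsum : ∑ j ∈ Icc 1 n, saalschutzTerm n j = 4 * n := by
    have h := sum_saalschutzTerm n
    rw [range_eq_Ico, sum_eq_sum_Ico_succ_bot (by omega), Ico_add_one_right_eq_Icc,
      saalschutzTerm_zero_right] at h
    linarith
  calc _ = ∑ j ∈ Icc 1 n, -(1/2) * saalschutzTerm n j := by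
        refine sum_congr rfl fun j hj => ?_
        rw [mem_Icc] at hj
        exact summand_eq_neg_half_mul_saalschutzTerm hj.1 hj.2
    _ = -2 * n := by rw [← mul_sum, hsum]; ring

theorem stmt_4 (n : ℕ) (hn : 1 ≤ n) :
    ∑ j ∈ Finset.Icc 1 n,
        (n.choose j : ℚ) * (((2 * j - 2).factorial : ℚ) / ((j - 1).factorial : ℚ)) *
          (rf (1/2 + 2 * j) (n - j) / rf (1/2) n) * (-1 : ℚ) ^ j
      = -2 * n :=
  stmt_4_general n
end

section
/- For natural numbers j ≤ n, the 2j-th derivative of the Legendre polynomial Le_{2n} evaluated at 0 equals (-1)^{n-j} (1/2)_{n+j} 2^{2j} / (n-j)!. Moreover, for all natural numbers j and n, the 2j-th derivative of Le_{2n+1} evaluated at 0 is 0. -/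
/-! Since `(Dᵏ p)(0) = k! · [xᵏ] p`, the Rodrigues formula gives
`(Dᵏ Le_m)(0) = (k+m)! / (2ᵐ m!) · [x^(k+m)] (x² - 1)ᵐ`. The polynomial `(x² - 1)ᵐ` is even with
`[x^(2t)] (x² - 1)ᵐ = (-1)^(m-t) C(m,t)`, and `(1/2)_k = (2k)! / (2^(2k) k!)` turns the even case into
an identity of factorials. -/

open Polynomial

/-- Legendre polynomial via the Rodrigues formula. -/
noncomputable def Le (n : ℕ) : Polynomial ℚ :=
  C (1 / (2 ^ n * (n.factorial : ℚ))) * derivative^[n] ((X ^ 2 - 1) ^ n)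

open scoped Nat

namespace Polynomial

theorem iterate_derivative_eval_zero {R : Type*} [Semiring R] (p : R[X]) (k : ℕ) :
    (derivative^[k] p).eval 0 = k ! * p.coeff k := by
  rw [← coeff_zero_eq_eval_zero, coeff_iterate_derivative, zero_add, Nat.descFactorial_self,
    nsmul_eq_mul]

section SqSubOnePow

variable {R : Type*} [CommRing R]

theorem sq_sub_one_pow_eq_expand (m : ℕ) :
    ((X ^ 2 - 1) ^ m : R[X]) = expand R 2 ((X + C (-1)) ^ m) := by
  simp [sub_eq_add_neg]

theorem coeff_sq_sub_one_pow_two_mul (m t : ℕ) :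
    ((X ^ 2 - 1) ^ m : R[X]).coeff (2 * t) = (-1) ^ (m - t) * (m.choose t : R) := by
  rw [sq_sub_one_pow_eq_expand, coeff_expand two_pos, if_pos (dvd_mul_right 2 t),
    mul_div_cancel_left₀ t two_ne_zero, coeff_X_add_C_pow]

theorem coeff_sq_sub_one_pow_two_mul_add_one (m t : ℕ) :
    ((X ^ 2 - 1) ^ m : R[X]).coeff (2 * t + 1) = 0 := by
  rw [sq_sub_one_pow_eq_expand, coeff_expand two_pos, if_neg (by omega)]

end SqSubOnePow

end Polynomial

theorem ascPochhammer_eval_half {K : Type*} [Field K] [CharZero K] (k : ℕ) :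
    (ascPochhammer K k).eval (1 / 2) = (2 * k)! / (2 ^ (2 * k) * k !) := by
  induction k with
  | zero => simp
  | succ k ih =>
    rw [ascPochhammer_succ_eval, ih, mul_add_one 2 k, Nat.factorial_succ, Nat.factorial_succ,
      Nat.factorial_succ]
    push_cast
    field_simp
    ring

theorem iterate_derivative_Le_eval_zero (m k : ℕ) :
    (derivative^[k] (Le m)).eval 0 =
      (k + m)! / (2 ^ m * m !) * ((X ^ 2 - 1) ^ m : ℚ[X]).coeff (k + m) := by
  rw [Le, iterate_derivative_C_mul, eval_mul, eval_C, ← Function.iterate_add_apply,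
    iterate_derivative_eval_zero]
  ring

theorem stmt_11 :
    (∀ n j : ℕ, j ≤ n →
        (derivative^[2 * j] (Le (2 * n))).eval 0 =
          (-1 : ℚ) ^ (n - j) * rf (1/2) (n + j) * 2 ^ (2 * j) / ((n - j).factorial : ℚ)) ∧
      ∀ n j : ℕ, (derivative^[2 * j] (Le (2 * n + 1))).eval 0 = 0 := by
  refine ⟨fun n j hjn => ?_, fun n j => ?_⟩
  · rw [iterate_derivative_Le_eval_zero, ← mul_add, coeff_sq_sub_one_pow_two_mul,
      show 2 * n - (j + n) = n - j by omega, add_comm j n,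
      Nat.cast_choose ℚ (show n + j ≤ 2 * n by omega), show 2 * n - (n + j) = n - j by omega,
      rf, ascPochhammer_eval_half]
    field_simp
    ring
  · rw [iterate_derivative_Le_eval_zero, show 2 * j + (2 * n + 1) = 2 * (j + n) + 1 by ring,
      coeff_sq_sub_one_pow_two_mul_add_one, mul_zero]
end

section
/- If h(x) = c_0 + c_1 x + ··· + c_n x^n is a real polynomial of degree n (c_n ≠ 0) with only real zeros, c_0 ≠ 0, and c_p = 0 for some 0 < p < n, then c_{p-1} c_{p+1} < 0. -/
/-!
Differentiating `p - 1` times keeps the polynomial real-rooted (Rolle) and moves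
`c_{p-1}, c_p, c_{p+1}` to positions `0, 1, 2`, up to positive factors. For a real-rooted `f`
with `f(0) ≠ 0`, Newton's identity for the reciprocals `1/r` of the roots gives
`c₁² - 2 c₀ c₂ = c₀² ∑ r⁻² > 0`, so `c₁ = 0` forces `c₀ c₂ < 0`. The same sign rule, applied
upwards from `c₀ ≠ 0`, shows that no two consecutive coefficients below the degree vanish;
in particular `c_{p-1} ≠ 0`.
-/

open Polynomial

/-- A real polynomial has only real zeros if every complex root of it is real. -/
def HasOnlyRealZeros (p : Polynomial ℝ) : Prop :=
  ∀ z : ℂ, (p.map (algebraMap ℝ ℂ)).IsRoot z → z.im = 0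

theorem HasOnlyRealZeros.splits {h : ℝ[X]} (hreal : HasOnlyRealZeros h) : h.Splits :=
  Splits.of_splits_map_of_injective (algebraMap ℝ ℂ).injective (IsAlgClosed.splits _)
    fun z hz => ⟨z.re, Complex.ext (by simp) (by simpa using (hreal z (mem_roots'.mp hz).2).symm)⟩

theorem Multiset.prod_X_sub_C_coeff_one_sq_sub_two_mul_coeff_zero_mul_coeff_two {K : Type*}
    [Field K] (s : Multiset K) (hs : ∀ r ∈ s, r ≠ 0) :
    (s.map (X - C ·)).prod.coeff 1 ^ 2
      - 2 * (s.map (X - C ·)).prod.coeff 0 * (s.map (X - C ·)).prod.coeff 2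
      = (s.map (X - C ·)).prod.coeff 0 ^ 2 * (s.map (·⁻¹ ^ 2)).sum := by
  induction s using Multiset.induction with
  | empty => simp [coeff_one]
  | cons r t ih =>
    have hr : r * r⁻¹ = 1 := mul_inv_cancel₀ (hs r (Multiset.mem_cons_self r t))
    have ih := ih fun x hx => hs x (Multiset.mem_cons_of_mem hx)
    set q := (t.map (X - C ·)).prod
    have hcoeff_succ : ∀ k, ((X - C r) * q).coeff (k + 1) = q.coeff k - r * q.coeff (k + 1) := by
      intro k
      rw [sub_mul, coeff_sub, coeff_C_mul, coeff_X_mul]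
    have hcoeff_zero : ((X - C r) * q).coeff 0 = -r * q.coeff 0 := by simp [sub_mul]
    rw [Multiset.map_cons, Multiset.prod_cons, Multiset.map_cons, Multiset.sum_cons,
      hcoeff_zero, hcoeff_succ 0, hcoeff_succ 1]
    linear_combination r ^ 2 * ih - q.coeff 0 ^ 2 * (r * r⁻¹ + 1) * hr

namespace Polynomial

theorem natDegree_derivative_eq_sub_one {R : Type*} [Semiring R] [NoZeroDivisors R]
    [CharZero R] (f : R[X]) : (derivative f).natDegree = f.natDegree - 1 := by
  rcases Nat.eq_zero_or_pos f.natDegree with h0 | hpos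
  · simp [h0, derivative_of_natDegree_zero h0]
  refine le_antisymm (natDegree_derivative_le f) (le_natDegree_of_ne_zero ?_)
  rw [coeff_derivative, Nat.sub_add_cancel hpos]
  exact mul_ne_zero (leadingCoeff_ne_zero.mpr (ne_zero_of_natDegree_gt hpos))
    (Nat.cast_add_one_ne_zero _)

theorem Splits.derivative_of_real {f : ℝ[X]} (hf : f.Splits) : (derivative f).Splits := by
  rw [splits_iff_card_roots] at hf ⊢
  have hrolle := card_roots_le_derivative f
  have hcard := card_roots' (derivative f)
  rw [natDegree_derivative_eq_sub_one] at hcard ⊢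
  omega

theorem Splits.iterate_derivative_of_real {f : ℝ[X]} (hf : f.Splits) (k : ℕ) :
    (derivative^[k] f).Splits := by
  induction k with
  | zero => exact hf
  | succ k ih => rw [Function.iterate_succ_apply']; exact ih.derivative_of_real

theorem ne_zero_of_mem_roots_of_coeff_zero_ne_zero {R : Type*} [CommRing R] [IsDomain R]
    {f : R[X]} (h0 : f.coeff 0 ≠ 0) {r : R} (hr : r ∈ f.roots) : r ≠ 0 := by
  rintro rfl
  exact h0 (coeff_zero_eq_zero_of_zero_isRoot (isRoot_of_mem_roots hr))

theorem Splits.coeff_one_sq_sub_two_mul_coeff_zero_mul_coeff_two {K : Type*} [Field K]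
    {f : K[X]} (hf : f.Splits) (h0 : f.coeff 0 ≠ 0) :
    f.coeff 1 ^ 2 - 2 * f.coeff 0 * f.coeff 2
      = f.coeff 0 ^ 2 * (f.roots.map (·⁻¹ ^ 2)).sum := by
  have hq := Multiset.prod_X_sub_C_coeff_one_sq_sub_two_mul_coeff_zero_mul_coeff_two f.roots
    fun _ => ne_zero_of_mem_roots_of_coeff_zero_ne_zero h0
  have hc : ∀ k, f.coeff k = f.leadingCoeff * (f.roots.map (X - C ·)).prod.coeff k := by
    intro k
    conv_lhs => rw [hf.eq_prod_roots, coeff_C_mul]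
  rw [hc 0, hc 1, hc 2]
  linear_combination f.leadingCoeff ^ 2 * hq

theorem Splits.coeff_zero_mul_coeff_two_neg {K : Type*} [Field K] [LinearOrder K]
    [IsStrictOrderedRing K] {f : K[X]} (hf : f.Splits) (hdeg : f.natDegree ≠ 0)
    (h0 : f.coeff 0 ≠ 0) (h1 : f.coeff 1 = 0) : f.coeff 0 * f.coeff 2 < 0 := by
  have hid := hf.coeff_one_sq_sub_two_mul_coeff_zero_mul_coeff_two h0
  obtain ⟨r, hr⟩ := Multiset.exists_mem_of_ne_zero (hf.roots_ne_zero hdeg)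
  have hr0 := ne_zero_of_mem_roots_of_coeff_zero_ne_zero h0 hr
  have hsum : 0 < (f.roots.map (·⁻¹ ^ 2)).sum :=
    calc 0 < r⁻¹ ^ 2 := by positivity
      _ ≤ _ := Multiset.single_le_sum
        (fun x hx => by obtain ⟨y, -, rfl⟩ := Multiset.mem_map.mp hx; positivity) _
        (Multiset.mem_map_of_mem (·⁻¹ ^ 2) hr)
  have hc0 : 0 < f.coeff 0 ^ 2 := by positivity
  rw [h1] at hid
  nlinarith [mul_pos hc0 hsum]

theorem Splits.coeff_mul_coeff_add_two_neg_of_real {f : ℝ[X]} (hf : f.Splits) {j : ℕ}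
    (hj : j + 1 < f.natDegree) (hcj : f.coeff j ≠ 0) (hcj1 : f.coeff (j + 1) = 0) :
    f.coeff j * f.coeff (j + 2) < 0 := by
  set g := derivative^[j] f
  have hg : ∀ m, g.coeff m = (m + j).descFactorial j * f.coeff (m + j) := fun m => by
    rw [coeff_iterate_derivative, nsmul_eq_mul]
  have hfac : ∀ n, j ≤ n → (0 : ℝ) < n.descFactorial j := fun n hn => by
    exact_mod_cast Nat.descFactorial_pos.mpr hn
  have hgdeg : g.natDegree ≠ 0 := by
    have hlead : g.coeff (f.natDegree - j) ≠ 0 := by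
      rw [hg, Nat.sub_add_cancel (by omega)]
      exact mul_ne_zero (hfac _ (by omega)).ne'
        (leadingCoeff_ne_zero.mpr (ne_zero_of_natDegree_gt hj))
    have hle := le_natDegree_of_ne_zero hlead
    omega
  have hneg := (hf.iterate_derivative_of_real j).coeff_zero_mul_coeff_two_neg hgdeg
    (by rw [hg, zero_add]; exact mul_ne_zero (hfac j le_rfl).ne' hcj)
    (by rw [hg, add_comm, hcj1, mul_zero])
  rw [hg, hg, zero_add, add_comm 2] at hneg
  nlinarith [mul_pos (hfac j le_rfl) (hfac (j + 2) (by omega))]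

theorem Splits.coeff_ne_zero_of_coeff_succ_eq_zero_of_real {f : ℝ[X]} (hf : f.Splits)
    (h0 : f.coeff 0 ≠ 0) {j : ℕ} (hj : j + 1 < f.natDegree) (hcj1 : f.coeff (j + 1) = 0) :
    f.coeff j ≠ 0 := by
  induction j with
  | zero => exact h0
  | succ j ih =>
    intro hcj
    have hneg := hf.coeff_mul_coeff_add_two_neg_of_real (by omega) (ih (by omega) hcj) hcj
    rw [hcj1, mul_zero] at hneg
    exact hneg.false

end Polynomial

theorem stmt_13_general (h : Polynomial ℝ) (n p : ℕ)
    (hdeg : h.natDegree = n)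
    (hreal : HasOnlyRealZeros h)
    (h0 : h.coeff 0 ≠ 0) (hp0 : 0 < p) (hpn : p < n) (hp : h.coeff p = 0) :
    h.coeff (p - 1) * h.coeff (p + 1) < 0 := by
  subst hdeg
  obtain ⟨j, rfl⟩ : ∃ j, p = j + 1 := ⟨p - 1, by omega⟩
  have hs := hreal.splits
  rw [Nat.add_sub_cancel]
  exact hs.coeff_mul_coeff_add_two_neg_of_real hpn
    (hs.coeff_ne_zero_of_coeff_succ_eq_zero_of_real h0 hpn hp) hp

theorem stmt_13 (h : Polynomial ℝ) (n p : ℕ)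
    (hdeg : h.natDegree = n) (hn : h.coeff n ≠ 0)
    (hreal : HasOnlyRealZeros h)
    (h0 : h.coeff 0 ≠ 0) (hp0 : 0 < p) (hpn : p < n) (hp : h.coeff p = 0) :
    h.coeff (p - 1) * h.coeff (p + 1) < 0 :=
  stmt_13_general h n p hdeg hreal h0 hp0 hpn hp
end
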